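/- For r in (0,1), with α = r² and β = φ_{1/3}(r)², the Legendre–Jacobi modular equation of order 3 holds: (αβ)^{1/4} + ((1−α)(1−β))^{1/4} = 1. -/

import Mathlib

noncomputable def ellK (r : ℝ) : ℝ :=
  ∫ θ in (0:ℝ)..(Real.pi/2), 1 / Real.sqrt (1 - r^2 * Real.sin θ ^ 2)

noncomputable def mu (r : ℝ) : ℝ :=
  (Real.pi/2) * ellK (Real.sqrt (1 - r^2)) / ellK r

noncomputable def muInv (y : ℝ) : ℝ := Function.invFunOn mu (Set.Ioo 0 1) y

noncomputable def phi (K r : ℝ) : ℝ :=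
  if r = 0 then 0 else if r = 1 then 1 else muInv (mu r / K)

/-! Write `K a` (`ellKsq a`) for the complete elliptic integral as a function of the squared
modulus, so that `ellK r = K (r ^ 2)`. For `1 < m < 3` put `α = (m-1)(m+3)³/(16m³)` and `β = (m-1)³(m+3)/(16m)`.
Jacobi's cubic substitution `sin φ = y (4m + (m-1)² y²) / (4 + (m-1)(m+3) y²)`, `y = sin ψ`,
maps `[0, π/2]` onto itself and turns `dφ / √(1 - α sin² φ)` into `m dψ / √(1 - β sin² ψ)`,
so `K α = m K β`. The involution `m ↦ 3/m` exchanges `α` with `1 - β` and `β` with `1 - α`, so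
also `K (1 - β) = (3/m) K (1 - α)`; dividing, `μ(√β) = 3 μ(√α)`, and since `μ` is strictly
decreasing, `φ_{1/3}(√α) = √β`. What remains is algebra: `αβ = ((m-1)(m+3)/(4m))⁴` and
`(1-α)(1-β) = ((3-m)(m+1)/(4m))⁴`, and these fourth roots add up to `1`. Every `α ∈ (0, 1)`
is attained for some `m ∈ (1, 3)` by the intermediate value theorem. -/

open Real Set intervalIntegral

noncomputable def ellKIntegrand (a θ : ℝ) : ℝ := 1 / √(1 - a * sin θ ^ 2)

noncomputable def ellKsq (a : ℝ) : ℝ := ∫ θ in (0:ℝ)..π / 2, ellKIntegrand a θ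

lemma one_sub_mul_sin_sq_pos {a : ℝ} (ha : a < 1) (θ : ℝ) : 0 < 1 - a * sin θ ^ 2 := by
  have := sin_sq_le_one θ
  rcases le_or_gt a 0 with h | h <;> nlinarith [sq_nonneg (sin θ)]

lemma ellKIntegrand_pos {a : ℝ} (ha : a < 1) (θ : ℝ) : 0 < ellKIntegrand a θ := by
  have := one_sub_mul_sin_sq_pos ha θ
  unfold ellKIntegrand; positivity

lemma continuous_ellKIntegrand {a : ℝ} (ha : a < 1) : Continuous (ellKIntegrand a) :=
  continuous_const.div (by fun_prop) fun θ ↦ (sqrt_pos.2 (one_sub_mul_sin_sq_pos ha θ)).ne'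

lemma ellKsq_pos {a : ℝ} (ha : a < 1) : 0 < ellKsq a :=
  intervalIntegral_pos_of_pos_on ((continuous_ellKIntegrand ha).intervalIntegrable _ _)
    (fun θ _ ↦ ellKIntegrand_pos ha θ) (by positivity)

lemma ellKIntegrand_le {a b : ℝ} (hab : a ≤ b) (hb : b < 1) (θ : ℝ) :
    ellKIntegrand a θ ≤ ellKIntegrand b θ := by
  have := sin_sq_le_one θ
  exact one_div_le_one_div_of_le (sqrt_pos.2 (one_sub_mul_sin_sq_pos hb θ))
    (sqrt_le_sqrt (by nlinarith [sq_nonneg (sin θ)]))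

lemma strictMonoOn_ellKsq : StrictMonoOn ellKsq (Iio 1) := by
  intro a ha b hb hab
  refine integral_lt_integral_of_continuousOn_of_le_of_exists_lt (by positivity)
    (continuous_ellKIntegrand (hab.trans hb)).continuousOn
    (continuous_ellKIntegrand hb).continuousOn
    (fun θ _ ↦ ellKIntegrand_le hab.le hb θ) ⟨π / 2, ⟨by positivity, le_rfl⟩, ?_⟩
  simp only [ellKIntegrand, sin_pi_div_two, one_pow, mul_one]
  exact one_div_lt_one_div_of_lt (sqrt_pos.2 (sub_pos.2 hb)) (sqrt_lt_sqrt (sub_nonneg.2 hb.le)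
    (sub_lt_sub_left hab 1))

lemma mu_eq_ellKsq {r : ℝ} (hr : r ^ 2 ≤ 1) :
    mu r = π / 2 * ellKsq (1 - r ^ 2) / ellKsq (r ^ 2) := by
  rw [mu, ellK, ellK, sq_sqrt (sub_nonneg.2 hr)]; rfl

lemma mu_sqrt {a : ℝ} (ha₀ : 0 ≤ a) (ha₁ : a ≤ 1) :
    mu √a = π / 2 * ellKsq (1 - a) / ellKsq a := by
  rw [mu_eq_ellKsq (by rwa [sq_sqrt ha₀]), sq_sqrt ha₀]

lemma strictAntiOn_mu : StrictAntiOn mu (Ioo 0 1) := by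
  intro r ⟨hr₀, hr₁⟩ s ⟨hs₀, hs₁⟩ hrs
  have hr2 : r ^ 2 < s ^ 2 := by gcongr
  have hs2 : s ^ 2 < 1 := by nlinarith
  have hmono := strictMonoOn_ellKsq (hr2.trans hs2) hs2 hr2
  have hanti := strictMonoOn_ellKsq (a := 1 - s ^ 2) (b := 1 - r ^ 2)
    (sub_lt_self (1:ℝ) (by positivity)) (sub_lt_self (1:ℝ) (by positivity)) (by linarith)
  have hpos := ellKsq_pos (a := 1 - r ^ 2) (sub_lt_self (1:ℝ) (by positivity))
  rw [mu_eq_ellKsq hs2.le, mu_eq_ellKsq (hr2.trans hs2).le]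
  exact div_lt_div₀ (by gcongr) hmono.le (by positivity) (ellKsq_pos (hr2.trans hs2))

/- With `m = 1 + 2p` these are the classical parametrization `α = p(2+p)³/(1+2p)³`,
`β = p³(2+p)/(1+2p)` of the cubic modular equation, `m` being the multiplier. -/
noncomputable def cubicAlpha (m : ℝ) : ℝ := (m - 1) * (m + 3) ^ 3 / (16 * m ^ 3)

noncomputable def cubicBeta (m : ℝ) : ℝ := (m - 1) ^ 3 * (m + 3) / (16 * m)

noncomputable def cubicSubst (m y : ℝ) : ℝ :=
  y * (4 * m + (m - 1) ^ 2 * y ^ 2) / (4 + (m - 1) * (m + 3) * y ^ 2)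

noncomputable def cubicAngle (m t : ℝ) : ℝ := arcsin (cubicSubst m (sin t))

noncomputable def cubicAngleDeriv (m t : ℝ) : ℝ :=
  (4 * m - (m - 1) * (m + 3) * sin t ^ 2) / (4 + (m - 1) * (m + 3) * sin t ^ 2)

section Cubic

variable {m : ℝ}

lemma cubicAlpha_mem_Ioo (hm₁ : 1 < m) (hm₃ : m < 3) : cubicAlpha m ∈ Ioo 0 1 := by
  have hden : 0 < 16 * m ^ 3 := by positivity
  have : 0 < m - 1 := by linarith
  have : 0 < m + 3 := by linarith
  refine ⟨div_pos (by positivity) hden, ?_⟩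
  rw [cubicAlpha, div_lt_one hden]
  nlinarith [mul_pos (pow_pos (by linarith : (0:ℝ) < 3 - m) 3) (by linarith : (0:ℝ) < m + 1)]

lemma cubicBeta_mem_Ioo (hm₁ : 1 < m) (hm₃ : m < 3) : cubicBeta m ∈ Ioo 0 1 := by
  have hden : 0 < 16 * m := by positivity
  have : 0 < m - 1 := by linarith
  have : 0 < m + 3 := by linarith
  refine ⟨div_pos (by positivity) hden, ?_⟩
  rw [cubicBeta, div_lt_one hden]
  nlinarith [mul_pos (pow_pos (by linarith : (0:ℝ) < m + 1) 3) (by linarith : (0:ℝ) < 3 - m)]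

lemma cubicAlpha_three_div (hm : m ≠ 0) : cubicAlpha (3 / m) = 1 - cubicBeta m := by
  unfold cubicAlpha cubicBeta; field_simp; ring

lemma cubicBeta_three_div (hm : m ≠ 0) : cubicBeta (3 / m) = 1 - cubicAlpha m := by
  unfold cubicAlpha cubicBeta; field_simp; ring

lemma cubicSubst_denom_pos (hm : 1 < m) (y : ℝ) : 0 < 4 + (m - 1) * (m + 3) * y ^ 2 := by
  have : 0 < (m - 1) * (m + 3) := by nlinarith
  positivity

lemma cubicAngleDeriv_numerator_pos (hm₁ : 1 < m) (hm₃ : m < 3) {y : ℝ} (hy : y ^ 2 ≤ 1) :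
    0 < 4 * m - (m - 1) * (m + 3) * y ^ 2 := by
  nlinarith [mul_nonneg (by nlinarith : (0:ℝ) ≤ (m - 1) * (m + 3)) (sub_nonneg.2 hy)]

lemma one_sub_cubicSubst_sq (hm : 1 < m) (y : ℝ) :
    1 - cubicSubst m y ^ 2 =
      (1 - y ^ 2) * ((4 - (m - 1) ^ 2 * y ^ 2) / (4 + (m - 1) * (m + 3) * y ^ 2)) ^ 2 := by
  have hD := (cubicSubst_denom_pos hm y).ne'
  rw [cubicSubst, div_pow, div_pow, one_sub_div (pow_ne_zero 2 hD), mul_div_assoc']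
  ring

lemma one_sub_cubicAlpha_mul_cubicSubst_sq (hm : 1 < m) (y : ℝ) :
    1 - cubicAlpha m * cubicSubst m y ^ 2 = (1 - cubicBeta m * y ^ 2) *
      ((4 * m - (m - 1) * (m + 3) * y ^ 2) / (m * (4 + (m - 1) * (m + 3) * y ^ 2))) ^ 2 := by
  have := (cubicSubst_denom_pos hm y).ne'
  have : m ≠ 0 := by positivity
  unfold cubicSubst cubicAlpha cubicBeta; field_simp; ring

lemma hasDerivAt_cubicSubst (hm : 1 < m) (y : ℝ) :
    HasDerivAt (cubicSubst m) ((4 - (m - 1) ^ 2 * y ^ 2) * (4 * m - (m - 1) * (m + 3) * y ^ 2) /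
      (4 + (m - 1) * (m + 3) * y ^ 2) ^ 2) y := by
  have hD := (cubicSubst_denom_pos hm y).ne'
  refine (((hasDerivAt_id' y).fun_mul (((hasDerivAt_pow 2 y).const_mul ((m - 1) ^ 2)).const_add
    (4 * m))).fun_div (((hasDerivAt_pow 2 y).const_mul ((m - 1) * (m + 3))).const_add 4)
    hD).congr_deriv ?_
  push_cast
  ring

lemma sin_cubicAngle (hm : 1 < m) (t : ℝ) : sin (cubicAngle m t) = cubicSubst m (sin t) := by
  have h := one_sub_cubicSubst_sq hm (sin t)
  have : cubicSubst m (sin t) ^ 2 ≤ 1 := by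
    rw [← sub_nonneg, h, ← cos_sq']
    positivity
  obtain ⟨h₁, h₂⟩ := abs_le.1 ((sq_le_one_iff_abs_le_one _).1 this)
  exact sin_arcsin h₁ h₂

lemma continuous_cubicAngle (hm : 1 < m) : Continuous (cubicAngle m) :=
  continuous_arcsin.comp ((continuous_iff_continuousAt.2 fun y ↦
    (hasDerivAt_cubicSubst hm y).continuousAt).comp continuous_sin)

lemma cubicAngle_zero : cubicAngle m 0 = 0 := by
  simp [cubicAngle, cubicSubst]

lemma cubicAngle_pi_div_two (hm : m ≠ -1) : cubicAngle m (π / 2) = π / 2 := by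
  have h : cubicSubst m 1 = (m + 1) ^ 2 / (m + 1) ^ 2 := by unfold cubicSubst; ring
  rw [cubicAngle, sin_pi_div_two, h, div_self (pow_ne_zero 2 (fun h ↦ hm (by linarith))),
    arcsin_one]

lemma hasDerivAt_cubicAngle (hm₁ : 1 < m) (hm₃ : m < 3) {t : ℝ} (ht : 0 < cos t) :
    HasDerivAt (cubicAngle m) (cubicAngleDeriv m t) t := by
  have hD := cubicSubst_denom_pos hm₁ (sin t)
  have hQ : 0 < 4 - (m - 1) ^ 2 * sin t ^ 2 := by
    nlinarith [mul_le_mul_of_nonneg_left (sin_sq_le_one t) (sq_nonneg (m - 1))]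
  have hsq := one_sub_cubicSubst_sq hm₁ (sin t)
  rw [← cos_sq'] at hsq
  have hsqrt : √(1 - cubicSubst m (sin t) ^ 2) =
      cos t * ((4 - (m - 1) ^ 2 * sin t ^ 2) / (4 + (m - 1) * (m + 3) * sin t ^ 2)) := by
    rw [hsq, sqrt_mul (by positivity), sqrt_sq ht.le, sqrt_sq (by positivity)]
  have hlt : |cubicSubst m (sin t)| < 1 := by
    rw [← sq_lt_one_iff_abs_lt_one, ← sub_pos, hsq]
    positivity
  obtain ⟨h₁, h₂⟩ := abs_lt.1 hlt
  refine ((hasDerivAt_arcsin h₁.ne' h₂.ne).comp t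
    ((hasDerivAt_cubicSubst hm₁ (sin t)).comp t (hasDerivAt_sin t))).congr_deriv ?_
  rw [hsqrt, cubicAngleDeriv]
  field_simp

lemma cubicAngleDeriv_pos (hm₁ : 1 < m) (hm₃ : m < 3) (t : ℝ) : 0 < cubicAngleDeriv m t :=
  div_pos (cubicAngleDeriv_numerator_pos hm₁ hm₃ (sin_sq_le_one t))
    (cubicSubst_denom_pos hm₁ (sin t))

lemma ellKIntegrand_cubicAngle_mul_deriv (hm₁ : 1 < m) (hm₃ : m < 3) (t : ℝ) :
    ellKIntegrand (cubicAlpha m) (cubicAngle m t) * cubicAngleDeriv m t =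
      m * ellKIntegrand (cubicBeta m) t := by
  have hP := cubicAngleDeriv_numerator_pos hm₁ hm₃ (sin_sq_le_one t)
  have hD := cubicSubst_denom_pos hm₁ (sin t)
  have hB := one_sub_mul_sin_sq_pos (cubicBeta_mem_Ioo hm₁ hm₃).2 t
  have : 0 < m := by linarith
  rw [ellKIntegrand, ellKIntegrand, sin_cubicAngle hm₁, one_sub_cubicAlpha_mul_cubicSubst_sq hm₁,
    sqrt_mul hB.le, sqrt_sq (by positivity), cubicAngleDeriv]
  generalize 4 * m - (m - 1) * (m + 3) * sin t ^ 2 = P at *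
  generalize 4 + (m - 1) * (m + 3) * sin t ^ 2 = D at *
  field_simp

lemma ellKsq_cubicAlpha (hm₁ : 1 < m) (hm₃ : m < 3) :
    ellKsq (cubicAlpha m) = m * ellKsq (cubicBeta m) := by
  calc ellKsq (cubicAlpha m)
      = ∫ u in cubicAngle m 0..cubicAngle m (π / 2), ellKIntegrand (cubicAlpha m) u := by
        rw [cubicAngle_zero, cubicAngle_pi_div_two (by linarith), ellKsq]
    _ = ∫ t in (0:ℝ)..π / 2,
          (ellKIntegrand (cubicAlpha m) ∘ cubicAngle m) t * cubicAngleDeriv m t := by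
        refine (integral_comp_mul_deriv_of_deriv_nonneg ?_ (fun t ht ↦ ?_)
          (fun t _ ↦ (cubicAngleDeriv_pos hm₁ hm₃ t).le)).symm
        · exact (continuous_cubicAngle hm₁).continuousOn
        · rw [min_eq_left (by positivity), max_eq_right (by positivity)] at ht
          exact hasDerivAt_cubicAngle hm₁ hm₃
            (cos_pos_of_mem_Ioo ⟨by linarith [ht.1, pi_pos], ht.2⟩)
    _ = ∫ t in (0:ℝ)..π / 2, m * ellKIntegrand (cubicBeta m) t :=
        integral_congr fun t _ ↦ ellKIntegrand_cubicAngle_mul_deriv hm₁ hm₃ t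
    _ = m * ellKsq (cubicBeta m) := integral_const_mul _ _

end Cubic

lemma mu_sqrt_cubicBeta {m : ℝ} (hm₁ : 1 < m) (hm₃ : m < 3) :
    mu √(cubicBeta m) = 3 * mu √(cubicAlpha m) := by
  have hm₀ : 0 < m := by linarith
  have hα := cubicAlpha_mem_Ioo hm₁ hm₃
  have hβ := cubicBeta_mem_Ioo hm₁ hm₃
  have hK := ellKsq_cubicAlpha hm₁ hm₃
  have hK' := ellKsq_cubicAlpha (m := 3 / m) (by rw [lt_div_iff₀ hm₀]; linarith)
    (by rw [div_lt_iff₀ hm₀]; linarith)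
  rw [cubicAlpha_three_div hm₀.ne', cubicBeta_three_div hm₀.ne'] at hK'
  have := (ellKsq_pos hβ.2).ne'
  rw [mu_sqrt hβ.1.le hβ.2.le, mu_sqrt hα.1.le hα.2.le, hK', hK]
  field_simp

lemma exists_cubicAlpha_eq {a : ℝ} (ha : a ∈ Ioo 0 1) : ∃ m ∈ Ioo 1 3, cubicAlpha m = a := by
  have hcont : ContinuousOn cubicAlpha (Icc 1 3) := by
    refine ContinuousOn.div (by fun_prop) (by fun_prop) fun m hm ↦ ?_
    have : 0 < m := by linarith [hm.1]
    positivity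
  have h₁ : cubicAlpha 1 = 0 := by norm_num [cubicAlpha]
  have h₃ : cubicAlpha 3 = 1 := by norm_num [cubicAlpha]
  exact intermediate_value_Ioo (by norm_num) hcont (h₁ ▸ h₃ ▸ ha)

lemma phi_eq_of_mu_eq {K r s : ℝ} (hr : r ∈ Ioo 0 1) (hs : s ∈ Ioo 0 1)
    (h : mu s = mu r / K) : phi K r = s := by
  have hex : ∃ s ∈ Ioo 0 1, mu s = mu r / K := ⟨s, hs, h⟩
  rw [phi, if_neg hr.1.ne', if_neg hr.2.ne, muInv]
  exact strictAntiOn_mu.injOn (Function.invFunOn_mem hex) hs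
    ((Function.invFunOn_eq hex).trans h.symm)

lemma cubic_modular_identity {m : ℝ} (hm₁ : 1 < m) (hm₃ : m < 3) :
    (cubicAlpha m * cubicBeta m) ^ ((1:ℝ) / 4) +
      ((1 - cubicAlpha m) * (1 - cubicBeta m)) ^ ((1:ℝ) / 4) = 1 := by
  have hm₀ : m ≠ 0 := by positivity
  have hαβ : cubicAlpha m * cubicBeta m = ((m - 1) * (m + 3) / (4 * m)) ^ 4 := by
    unfold cubicAlpha cubicBeta; field_simp; ring
  have hαβ' : (1 - cubicAlpha m) * (1 - cubicBeta m) = ((3 - m) * (m + 1) / (4 * m)) ^ 4 := by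
    unfold cubicAlpha cubicBeta; field_simp; ring
  have hroot : ∀ x : ℝ, 0 ≤ x → (x ^ 4) ^ ((1:ℝ) / 4) = x := fun x hx ↦ by
    simpa using pow_rpow_inv_natCast hx (n := 4) (by norm_num)
  rw [hαβ, hαβ', hroot _ (div_nonneg (mul_nonneg (by linarith) (by linarith)) (by linarith)),
    hroot _ (div_nonneg (mul_nonneg (by linarith) (by linarith)) (by linarith))]
  field_simp
  ring

theorem modular_equation_order_three (r : ℝ) (hr : r ∈ Set.Ioo (0:ℝ) 1) :
    (r^2 * (phi (1/3) r)^2) ^ ((1:ℝ)/4) +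
      ((1 - r^2) * (1 - (phi (1/3) r)^2)) ^ ((1:ℝ)/4) = 1 := by
  obtain ⟨m, ⟨hm₁, hm₃⟩, hαr⟩ :=
    exists_cubicAlpha_eq (a := r ^ 2) ⟨pow_pos hr.1 2, by nlinarith [hr.1, hr.2]⟩
  have hβ := cubicBeta_mem_Ioo hm₁ hm₃
  have hs : √(cubicBeta m) ∈ Ioo 0 1 :=
    ⟨sqrt_pos.2 hβ.1, (sqrt_lt' one_pos).2 (by simpa using hβ.2)⟩
  have hphi : phi (1 / 3) r = √(cubicBeta m) := by
    refine phi_eq_of_mu_eq hr hs ?_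
    rw [mu_sqrt_cubicBeta hm₁ hm₃, hαr, sqrt_sq hr.1.le]
    ring
  rw [hphi, sq_sqrt hβ.1.le, ← hαr]
  exact cubic_modular_identity hm₁ hm₃
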